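/- Let (Ω,μ) be a probability space, {φ_k}_{k≥1} an orthonormal system in L²(Ω,μ), and (λ_k) a real sequence such that there is M with Σ_k |λ_k| φ_k(x)² ≤ M for μ-a.e. x (hypothesis H). Let W ∈ L²(Ω×Ω, μ×μ) satisfy W = Σ_{k≥1} λ_k φ_k⊗φ_k with convergence in L²(μ×μ). Then for (μ×μ)-a.e. (x,y) ∈ Ω×Ω, the partial sums Σ_{k=1}^n λ_k φ_k(x)φ_k(y) converge to W(x,y) as n → ∞. -/

import Mathlib

/-!
By AM–GM, `|λ_k φ_k(x) φ_k(y)| ≤ (|λ_k| φ_k(x)² + |λ_k| φ_k(y)²) / 2`, so hypothesis H bounds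
`Σ_k |λ_k φ_k(x) φ_k(y)|` by `M` for a.e. `(x, y)`: the series converges absolutely there, and
its partial sums are bounded by `M`, hence lie in `L²(μ × μ)`. Convergence in `L²` to `W` gives a
subsequence converging a.e. to `W`, which pins down the limit of the full sequence.
-/

open MeasureTheory Filter Topology

theorem sum_Icc_one_eq_sum_range_succ {M : Type*} [AddCommMonoid M] (f : ℕ → M) (N : ℕ) :
    ∑ k ∈ Finset.Icc 1 N, f k = ∑ k ∈ Finset.range N, f (k + 1) := by
  rw [← Finset.Ico_add_one_right_eq_Icc, Finset.sum_Ico_eq_sum_range, Nat.add_sub_cancel]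
  simp only [add_comm]

theorem exists_tendsto_sum_Icc_of_sum_abs_le {f : ℕ → ℝ} {C : ℝ}
    (h : ∀ N, ∑ k ∈ Finset.Icc 1 N, |f k| ≤ C) :
    ∃ l, Tendsto (fun N => ∑ k ∈ Finset.Icc 1 N, f k) atTop (𝓝 l) := by
  simp only [sum_Icc_one_eq_sum_range_succ] at h ⊢
  have hsum : Summable fun k => f (k + 1) :=
    (summable_of_sum_range_le (fun _ => abs_nonneg _) h).of_abs
  exact ⟨_, hsum.hasSum.tendsto_sum_nat⟩

theorem abs_mul_mul_le_half_add (a u v : ℝ) :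
    |a * u * v| ≤ (|a| * u ^ 2 + |a| * v ^ 2) / 2 := by
  have huv : |u * v| ≤ (u ^ 2 + v ^ 2) / 2 := by
    rw [abs_mul]
    nlinarith [sq_abs u, sq_abs v, sq_nonneg (|u| - |v|)]
  rw [mul_assoc, abs_mul]
  nlinarith [abs_nonneg a]

theorem sum_abs_mul_mul_le_half_add {ι : Type*} (s : Finset ι) (a u v : ι → ℝ) :
    ∑ i ∈ s, |a i * u i * v i| ≤ (∑ i ∈ s, |a i| * u i ^ 2 + ∑ i ∈ s, |a i| * v i ^ 2) / 2 := by
  rw [← Finset.sum_add_distrib, Finset.sum_div]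
  exact Finset.sum_le_sum fun i _ => abs_mul_mul_le_half_add (a i) (u i) (v i)

theorem MeasureTheory.MemLp.eLpNorm_two_eq_ofReal_sqrt_integral_sq {α : Type*}
    [MeasurableSpace α] {ν : Measure α} {f : α → ℝ} (hf : MemLp f 2 ν) :
    eLpNorm f 2 ν = ENNReal.ofReal √(∫ x, f x ^ 2 ∂ν) := by
  rw [hf.eLpNorm_eq_integral_rpow_norm two_ne_zero ENNReal.ofNat_ne_top, Real.sqrt_eq_rpow]
  norm_num

theorem exists_seq_tendsto_ae_of_tendsto_integral_sq {α : Type*} [MeasurableSpace α]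
    {ν : Measure α} {f : ℕ → α → ℝ} {g : α → ℝ} (hf : ∀ n, MemLp (f n) 2 ν) (hg : MemLp g 2 ν)
    (h : Tendsto (fun n => ∫ x, (g x - f n x) ^ 2 ∂ν) atTop (𝓝 0)) :
    ∃ ns : ℕ → ℕ, StrictMono ns ∧ ∀ᵐ x ∂ν, Tendsto (fun i => f (ns i) x) atTop (𝓝 (g x)) := by
  have hnorm : Tendsto (fun n => eLpNorm (f n - g) 2 ν) atTop (𝓝 0) := by
    simp_rw [eLpNorm_sub_comm _ g, (hg.sub (hf _)).eLpNorm_two_eq_ofReal_sqrt_integral_sq]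
    simpa using ENNReal.tendsto_ofReal h.sqrt
  exact (tendstoInMeasure_of_tendsto_eLpNorm two_ne_zero (fun n => (hf n).1) hg.1
    hnorm).exists_seq_tendsto_ae

section TensorExpansion

variable {Ω : Type*} (lam : ℕ → ℝ) (φ : ℕ → Ω → ℝ)

def tensorPartialSum (N : ℕ) (p : Ω × Ω) : ℝ :=
  ∑ k ∈ Finset.Icc 1 N, lam k * φ k p.1 * φ k p.2

variable {lam φ}

theorem sum_abs_tensor_le {M : ℝ} {x y : Ω}
    (hx : ∀ N, ∑ k ∈ Finset.Icc 1 N, |lam k| * φ k x ^ 2 ≤ M)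
    (hy : ∀ N, ∑ k ∈ Finset.Icc 1 N, |lam k| * φ k y ^ 2 ≤ M) (N : ℕ) :
    ∑ k ∈ Finset.Icc 1 N, |lam k * φ k x * φ k y| ≤ M := by
  linarith [sum_abs_mul_mul_le_half_add (Finset.Icc 1 N) lam (φ · x) (φ · y), hx N, hy N]

theorem ae_prod_sum_abs_tensor_le [MeasurableSpace Ω] {μ : Measure Ω} [SFinite μ] {M : ℝ}
    (hM : ∀ᵐ x ∂μ, ∀ N, ∑ k ∈ Finset.Icc 1 N, |lam k| * φ k x ^ 2 ≤ M) :
    ∀ᵐ p ∂(μ.prod μ), ∀ N, ∑ k ∈ Finset.Icc 1 N, |lam k * φ k p.1 * φ k p.2| ≤ M := by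
  filter_upwards [Measure.quasiMeasurePreserving_fst.ae hM,
    Measure.quasiMeasurePreserving_snd.ae hM] with p hx hy
  exact sum_abs_tensor_le hx hy

theorem abs_tensorPartialSum_le {M : ℝ} {p : Ω × Ω}
    (hp : ∀ N, ∑ k ∈ Finset.Icc 1 N, |lam k * φ k p.1 * φ k p.2| ≤ M) (N : ℕ) :
    |tensorPartialSum lam φ N p| ≤ M :=
  (Finset.abs_sum_le_sum_abs _ _).trans (hp N)

theorem measurable_tensorPartialSum [MeasurableSpace Ω] (hφ : ∀ k, Measurable (φ k)) (N : ℕ) :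
    Measurable (tensorPartialSum lam φ N) := by
  unfold tensorPartialSum
  fun_prop

theorem memLp_tensorPartialSum [MeasurableSpace Ω] {μ : Measure Ω} [IsFiniteMeasure μ]
    (hφ : ∀ k, Measurable (φ k)) {M : ℝ}
    (hM : ∀ᵐ p ∂(μ.prod μ), ∀ N, ∑ k ∈ Finset.Icc 1 N, |lam k * φ k p.1 * φ k p.2| ≤ M)
    (q : ENNReal) (N : ℕ) : MemLp (tensorPartialSum lam φ N) q (μ.prod μ) :=
  .of_bound (measurable_tensorPartialSum hφ N).aestronglyMeasurable M
    (hM.mono fun _ hp => abs_tensorPartialSum_le hp N)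

end TensorExpansion

theorem spectral_expansion_ae_pointwise_convergence_general
    {Ω : Type*} [MeasurableSpace Ω] (μ : Measure Ω) [IsProbabilityMeasure μ]
    (lam : ℕ → ℝ) (φ : ℕ → Ω → ℝ) (hφmeas : ∀ k, Measurable (φ k))
    (hH : ∃ M : ℝ, ∀ᵐ x ∂μ, ∀ N : ℕ, ∑ k ∈ Finset.Icc 1 N, |lam k| * φ k x ^ 2 ≤ M)
    (W : Ω → Ω → ℝ)
    (hWL2 : MemLp (fun p : Ω × Ω => W p.1 p.2) 2 (μ.prod μ))
    (hL2 : Tendsto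
      (fun N => ∫ p : Ω × Ω,
        (W p.1 p.2 - ∑ k ∈ Finset.Icc 1 N, lam k * φ k p.1 * φ k p.2) ^ 2 ∂(μ.prod μ))
      atTop (nhds 0)) :
    ∀ᵐ p ∂(μ.prod μ), Tendsto
      (fun N => ∑ k ∈ Finset.Icc 1 N, lam k * φ k p.1 * φ k p.2)
      atTop (nhds (W p.1 p.2)) := by
  obtain ⟨M, hM⟩ := hH
  have hbound := ae_prod_sum_abs_tensor_le hM
  obtain ⟨ns, hns, hsub⟩ := exists_seq_tendsto_ae_of_tendsto_integral_sq
    (memLp_tensorPartialSum hφmeas hbound 2) hWL2 hL2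
  filter_upwards [hbound, hsub] with p hp hpsub
  obtain ⟨l, hl⟩ := exists_tendsto_sum_Icc_of_sum_abs_le hp
  rwa [tendsto_nhds_unique (hl.comp hns.tendsto_atTop) hpsub] at hl

/-- Lemma 8 of the paper: if `{φ_k}` is an orthonormal system in
`L²(Ω,μ)` and `(λ_k)` satisfies hypothesis `H` (i.e. `Σ_k |λ_k| φ_k(x)² ≤ M` a.e.),
and `W ∈ L²(μ×μ)` equals `Σ_k λ_k φ_k ⊗ φ_k` in the `L²` sense, then the partial sums
`Σ_{k=1}^n λ_k φ_k(x) φ_k(y)` converge to `W(x,y)` for `(μ×μ)`-a.e. `(x,y)`. -/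
theorem spectral_expansion_ae_pointwise_convergence
    {Ω : Type*} [MeasurableSpace Ω] (μ : Measure Ω) [IsProbabilityMeasure μ]
    (lam : ℕ → ℝ) (φ : ℕ → Ω → ℝ) (hφmeas : ∀ k, Measurable (φ k))
    (horth : ∀ j k, 1 ≤ j → 1 ≤ k →
      ∫ x, φ j x * φ k x ∂μ = if j = k then (1 : ℝ) else 0)
    (hH : ∃ M : ℝ, ∀ᵐ x ∂μ, ∀ N : ℕ, ∑ k ∈ Finset.Icc 1 N, |lam k| * φ k x ^ 2 ≤ M)
    (W : Ω → Ω → ℝ) (hWmeas : Measurable (Function.uncurry W))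
    (hWL2 : MemLp (fun p : Ω × Ω => W p.1 p.2) 2 (μ.prod μ))
    (hL2 : Tendsto
      (fun N => ∫ p : Ω × Ω,
        (W p.1 p.2 - ∑ k ∈ Finset.Icc 1 N, lam k * φ k p.1 * φ k p.2) ^ 2 ∂(μ.prod μ))
      atTop (nhds 0)) :
    ∀ᵐ p ∂(μ.prod μ), Tendsto
      (fun N => ∑ k ∈ Finset.Icc 1 N, lam k * φ k p.1 * φ k p.2)
      atTop (nhds (W p.1 p.2)) :=
  spectral_expansion_ae_pointwise_convergence_general μ lam φ hφmeas hH W hWL2 hL2
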